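/- Let R be a finite commutative Frobenius ring, let C be a linear code of length n over R, and let G ∈ R^{m×n} be a generator matrix of C (i.e., the rows of G span C as an R-module), with columns g_1, …, g_n ∈ R^m. Then the cardinality of the R-submodule of R^m spanned by g_1, …, g_n equals |C|. -/

import Mathlib

noncomputable section
open scoped BigOperators

/-- The dual of a linear code `C ⊆ Rⁿ` with respect to the standard inner
product `u·v = ∑ ℓ, u ℓ * v ℓ`. -/
def dualCode {R : Type*} [CommRing R] {n : ℕ} (C : Submodule R (Fin n → R)) :
    Submodule R (Fin n → R) where
  carrier := {v | ∀ u ∈ C, ∑ ℓ, u ℓ * v ℓ = 0}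
  add_mem' := by
    intro v w hv hw u hu
    simp only [Set.mem_setOf_eq] at *
    have h1 := hv u hu
    have h2 := hw u hu
    simp only [Pi.add_apply, mul_add, Finset.sum_add_distrib, h1, h2, add_zero]
  zero_mem' := by
    intro u hu
    simp
  smul_mem' := by
    intro c v hv u hu
    simp only [Set.mem_setOf_eq] at *
    have h := hv u hu
    have : ∑ ℓ, u ℓ * (c • v) ℓ = c * ∑ ℓ, u ℓ * v ℓ := by
      rw [Finset.mul_sum]
      exact Finset.sum_congr rfl fun ℓ _ => by
        simp only [Pi.smul_apply, smul_eq_mul]; ring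
    rw [this, h, mul_zero]

/-- A finite commutative ring is Frobenius iff `|C|·|C⊥| = |R|ⁿ` for every
linear code `C` of every length `n` over `R`. -/
def IsFrobeniusRing (R : Type*) [CommRing R] [Fintype R] : Prop :=
  ∀ (n : ℕ) (C : Submodule R (Fin n → R)),
    Nat.card C * Nat.card (dualCode C) = Fintype.card R ^ n

/-! The dual of the row span of `G` is the kernel of `v ↦ G v`, whose image is the column span;
so `|column span| · |C⊥| = |R|ⁿ`, and the Frobenius identity `|C| · |C⊥| = |R|ⁿ` lets one
cancel `|C⊥|`. -/

theorem LinearMap.card_ker_mul_card_range {R M N : Type*} [Ring R] [AddCommGroup M] [Module R M]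
    [AddCommGroup N] [Module R N] (f : M →ₗ[R] N) :
    Nat.card (LinearMap.ker f) * Nat.card (LinearMap.range f) = Nat.card M := by
  rw [Submodule.card_eq_card_quotient_mul_card (LinearMap.ker f),
    Nat.card_congr f.quotKerEquivRange.toEquiv]

section DualCode

variable {R : Type*} [CommRing R] {n : ℕ}

theorem mem_dualCode_span_iff {ι : Type*} (S : ι → Fin n → R) (v : Fin n → R) :
    v ∈ dualCode (Submodule.span R (Set.range S)) ↔ ∀ i, S i ⬝ᵥ v = 0 := by
  constructor
  · intro hv i
    exact hv _ (Submodule.subset_span ⟨i, rfl⟩)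
  · intro hv u hu
    have hle :
        Submodule.span R (Set.range S) ≤ LinearMap.ker ((dotProductBilin R R).flip v) :=
      Submodule.span_le.2 (by rintro _ ⟨i, rfl⟩; exact hv i)
    exact hle hu

theorem dualCode_span_rows_eq_ker_mulVecLin {ι : Type*} (G : Matrix ι (Fin n) R) :
    dualCode (Submodule.span R (Set.range fun i => G i)) = LinearMap.ker G.mulVecLin := by
  ext v
  simp only [mem_dualCode_span_iff, LinearMap.mem_ker, Matrix.mulVecLin_apply, funext_iff]
  rfl

theorem card_dualCode_span_rows_mul_card_span_cols [Fintype R] {ι : Type*}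
    (G : Matrix ι (Fin n) R) :
    Nat.card (dualCode (Submodule.span R (Set.range fun i => G i)))
      * Nat.card (Submodule.span R (Set.range fun ℓ => G.transpose ℓ))
      = Fintype.card R ^ n := by
  have hcols : Submodule.span R (Set.range fun ℓ => G.transpose ℓ)
      = LinearMap.range G.mulVecLin :=
    (Matrix.range_mulVecLin G).symm
  rw [dualCode_span_rows_eq_ker_mulVecLin, hcols, LinearMap.card_ker_mul_card_range,
    Nat.card_eq_fintype_card, Fintype.card_fun, Fintype.card_fin]

end DualCode

theorem stmt0 {R : Type*} [CommRing R] [Fintype R] (hR : IsFrobeniusRing R)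
    {m n : ℕ} (C : Submodule R (Fin n → R)) (G : Matrix (Fin m) (Fin n) R)
    (hG : Submodule.span R (Set.range fun i => G i) = C) :
    Nat.card (Submodule.span R (Set.range fun ℓ => G.transpose ℓ) : Submodule R (Fin m → R))
      = Nat.card C := by
  have hcols := card_dualCode_span_rows_mul_card_span_cols G
  rw [hG, ← hR n C, mul_comm (Nat.card C)] at hcols
  exact Nat.eq_of_mul_eq_mul_left Nat.card_pos hcols

end
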